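/- Let Γ be a group generated by a finite symmetric set S = S⁻¹ ⊆ Γ whose growth function satisfies γ_S(n−1) ≥ C·n^d for every integer n ≥ 1, where C > 0 and d ≥ 1 are real constants. Then for every integer n ≥ 1 with Føl(n) < ∞, the Følner function satisfies Føl(n) ≥ ( C·d^d / (1+d)^{1+d} ) · n^d. -/

import Mathlib

open scoped Pointwise

variable {G : Type*} [Group G] [DecidableEq G]

/-- The ball of radius `r` in the word metric: elements of `G` expressible as
a product of at most `r` elements of `S`. -/
def wordBall (S : Finset G) : ℕ → Finset G
  | 0 => {1}
  | r + 1 => wordBall S r ∪ S * wordBall S r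

/-- The inner boundary of a finite set `D` with respect to the generating set `S`. -/
def innerBoundary (S D : Finset G) : Finset G :=
  D.filter fun x => ∃ s ∈ S, s * x ∉ D


/-- The Følner function of `(G,S)`: the smallest cardinality of a finite nonempty
set `D` with `n·|∂_S D| ≤ |D|`, or `∞` if no such set exists. -/
noncomputable def folner (S : Finset G) (n : ℕ) : ℕ∞ :=
  ⨅ (D : Finset G) (_ : D.Nonempty) (_ : n * (innerBoundary S D).card ≤ D.card),
    (D.card : ℕ∞)

/-!
A Følner set `D` is almost invariant under every `g ∈ B_S(r)`: `|D \ g D| ≤ r |∂_S D|`, since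
`g ↦ |D \ g D|` is subadditive and bounded by `|∂_S D|` on `S`. Counting pairs
`(g, x) ∈ B_S(r) × D` according to whether `x ∈ g D` gives
`|B_S(r)| |D| ≤ |D|² + |B_S(r)| r |∂_S D|`, so `n |∂_S D| ≤ |D|` forces
`γ_S(r) (n - r) ≤ |D| n`. Taking `r + 1 = ⌈d n / (1 + d)⌉`, near the maximiser of
`x ↦ x^d (n - x)`, and using `γ_S(r) ≥ C (r + 1)^d` yields the bound.
-/

open Finset

lemma card_sdiff_mul_smul_le (D : Finset G) (a b : G) :
    #(D \ (a * b) • D) ≤ #(D \ a • D) + #(D \ b • D) :=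
  calc #(D \ (a * b) • D)
      ≤ #((D \ a • D) ∪ (a • D \ (a * b) • D)) := card_le_card (sdiff_triangle _ _ _)
    _ ≤ #(D \ a • D) + #(a • D \ (a * b) • D) := card_union_le _ _
    _ = #(D \ a • D) + #(D \ b • D) := by
        rw [mul_smul, ← smul_finset_sdiff, card_smul_finset]

lemma sdiff_smul_subset_innerBoundary {S : Finset G} (D : Finset G) {s : G} (hs : s⁻¹ ∈ S) :
    D \ s • D ⊆ innerBoundary S D := by
  intro x hx
  rw [mem_sdiff, ← inv_smul_mem_iff] at hx
  exact mem_filter.mpr ⟨hx.1, s⁻¹, hs, hx.2⟩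

lemma card_sdiff_smul_le_of_mem_wordBall {S : Finset G} (hsymm : ∀ s ∈ S, s⁻¹ ∈ S)
    (D : Finset G) {r : ℕ} {g : G} (hg : g ∈ wordBall S r) :
    #(D \ g • D) ≤ r * #(innerBoundary S D) := by
  induction r generalizing g with
  | zero => simp_all [wordBall]
  | succ r ih =>
    rcases mem_union.mp hg with hg | hg
    · exact (ih hg).trans (Nat.mul_le_mul_right _ r.le_succ)
    · obtain ⟨s, hs, h, hh, rfl⟩ := mem_mul.mp hg
      calc #(D \ (s * h) • D) ≤ #(D \ s • D) + #(D \ h • D) := card_sdiff_mul_smul_le D s h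
        _ ≤ #(innerBoundary S D) + r * #(innerBoundary S D) :=
            add_le_add (card_le_card (sdiff_smul_subset_innerBoundary D (hsymm s hs))) (ih hh)
        _ = (r + 1) * #(innerBoundary S D) := by ring

lemma sum_card_inter_smul_le (B D : Finset G) : ∑ g ∈ B, #(D ∩ g • D) ≤ #D * #D := by
  simp_rw [card_inter_smul, ← card_mul_eq, sum_card_fiberwise_eq_card_filter]
  exact (card_filter_le _ _).trans_eq (by rw [card_product, card_inv])

lemma card_mul_card_le_sum_card_sdiff_smul (B D : Finset G) :
    #B * #D ≤ #D * #D + ∑ g ∈ B, #(D \ g • D) :=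
  calc #B * #D = ∑ g ∈ B, (#(D ∩ g • D) + #(D \ g • D)) := by
        simp [card_inter_add_card_sdiff]
    _ ≤ #D * #D + ∑ g ∈ B, #(D \ g • D) := by
        rw [sum_add_distrib]
        exact Nat.add_le_add_right (sum_card_inter_smul_le B D) _

lemma card_wordBall_mul_card_le {S : Finset G} (hsymm : ∀ s ∈ S, s⁻¹ ∈ S) (D : Finset G)
    (r : ℕ) :
    #(wordBall S r) * #D ≤ #D * #D + #(wordBall S r) * (r * #(innerBoundary S D)) :=
  calc #(wordBall S r) * #D ≤ #D * #D + ∑ g ∈ wordBall S r, #(D \ g • D) :=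
        card_mul_card_le_sum_card_sdiff_smul _ D
    _ ≤ #D * #D + ∑ _g ∈ wordBall S r, r * #(innerBoundary S D) := by
        gcongr with g hg
        exact card_sdiff_smul_le_of_mem_wordBall hsymm D hg
    _ = #D * #D + #(wordBall S r) * (r * #(innerBoundary S D)) := by
        rw [sum_const, smul_eq_mul]

lemma card_wordBall_mul_sub_le {S : Finset G} (hsymm : ∀ s ∈ S, s⁻¹ ∈ S) {D : Finset G}
    (hD : D.Nonempty) {n : ℕ} (hfol : n * #(innerBoundary S D) ≤ #D) (r : ℕ) :
    (#(wordBall S r) : ℝ) * (n - r) ≤ #D * n := by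
  have hcount : (#(wordBall S r) : ℝ) * #D ≤
      #D * #D + #(wordBall S r) * (r * #(innerBoundary S D)) := by
    exact_mod_cast card_wordBall_mul_card_le hsymm D r
  have hfol' : (n : ℝ) * #(innerBoundary S D) ≤ #D := by exact_mod_cast hfol
  have hpos : (0 : ℝ) < #D := by exact_mod_cast hD.card_pos
  refine le_of_mul_le_mul_left ?_ hpos
  nlinarith [mul_le_mul_of_nonneg_left hfol' (by positivity : (0 : ℝ) ≤ #(wordBall S r) * r)]

lemma exists_card_le_of_folner_le {S : Finset G} {n F : ℕ} (hF : folner S n ≤ F) :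
    ∃ D : Finset G, D.Nonempty ∧ n * #(innerBoundary S D) ≤ #D ∧ #D ≤ F := by
  have hlt : folner S n < (F + 1 : ℕ) := hF.trans_lt (by exact_mod_cast F.lt_succ_self)
  simp only [folner, iInf_lt_iff] at hlt
  obtain ⟨D, hD, hfol, hcard⟩ := hlt
  exact ⟨D, hD, hfol, Nat.lt_succ_iff.mp (by exact_mod_cast hcard)⟩

lemma rpow_mul_le_natCeil_rpow_mul {d x : ℝ} (hd : 0 < d) (hx : 0 ≤ x) :
    d ^ d / (1 + d) ^ (1 + d) * x ^ d * x ≤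
      (⌈d * x / (1 + d)⌉₊ : ℝ) ^ d * (x - ⌈d * x / (1 + d)⌉₊ + 1) := by
  set t := d * x / (1 + d)
  have ht : 0 ≤ t := by positivity
  have hx_sub : x - t = x / (1 + d) := by simp only [t]; field_simp; ring
  have hxt : x / (1 + d) ≤ x - ⌈t⌉₊ + 1 := by linarith [Nat.ceil_lt_add_one ht]
  calc d ^ d / (1 + d) ^ (1 + d) * x ^ d * x = t ^ d * (x / (1 + d)) := by
        rw [Real.div_rpow (by positivity) (by positivity), Real.mul_rpow hd.le hx,
          Real.rpow_add (by positivity), Real.rpow_one]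
        field_simp
    _ ≤ (⌈t⌉₊ : ℝ) ^ d * (x - ⌈t⌉₊ + 1) := by
        gcongr
        exact Nat.le_ceil t

theorem stmt10_general (S : Finset G)
    (hsymm : ∀ s ∈ S, s⁻¹ ∈ S)
    (C d : ℝ) (hC : 0 < C) (hd : 1 ≤ d)
    (hgrowth : ∀ n : ℕ, 1 ≤ n → C * (n : ℝ) ^ d ≤ ((wordBall S (n - 1)).card : ℝ))
    (n : ℕ) (hn : 1 ≤ n) (F : ℕ) (hF : folner S n = (F : ℕ∞)) :
    C * d ^ d / (1 + d) ^ (1 + d) * (n : ℝ) ^ d ≤ (F : ℝ) := by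
  obtain ⟨D, hD, hfol, hDF⟩ := exists_card_le_of_folner_le hF.le
  have hd0 : 0 < d := by linarith
  have hn0 : (0 : ℝ) < n := by exact_mod_cast hn
  set m := ⌈d * n / (1 + d)⌉₊
  have hm : 1 ≤ m := Nat.one_le_iff_ne_zero.mpr (Nat.ceil_pos.mpr (by positivity)).ne'
  have hmn : (m : ℝ) ≤ n := by
    have hle : d * n / (1 + d) ≤ n :=
      div_le_of_le_mul₀ (by positivity) (by positivity) (by linarith)
    exact_mod_cast Nat.ceil_le.mpr hle
  have hball : C * (m : ℝ) ^ d * (n - m + 1) ≤ #D * n := by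
    calc C * (m : ℝ) ^ d * (n - m + 1) ≤ #(wordBall S (m - 1)) * (n - ↑(m - 1)) := by
          have hsub : (n : ℝ) - ↑(m - 1) = n - m + 1 := by rw [Nat.cast_sub hm]; ring
          rw [hsub]
          exact mul_le_mul_of_nonneg_right (hgrowth m hm) (by linarith)
      _ ≤ #D * n := card_wordBall_mul_sub_le hsymm hD hfol _
  refine le_of_mul_le_mul_right ?_ hn0
  calc C * d ^ d / (1 + d) ^ (1 + d) * (n : ℝ) ^ d * n
      = C * (d ^ d / (1 + d) ^ (1 + d) * (n : ℝ) ^ d * n) := by ring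
    _ ≤ C * ((m : ℝ) ^ d * (n - m + 1)) :=
        mul_le_mul_of_nonneg_left (rpow_mul_le_natCeil_rpow_mul hd0 hn0.le) hC.le
    _ ≤ #D * n := by linarith
    _ ≤ F * n := by gcongr

theorem stmt10 (S : Finset G)
    (hsymm : ∀ s ∈ S, s⁻¹ ∈ S) (hgen : Subgroup.closure (S : Set G) = ⊤)
    (C d : ℝ) (hC : 0 < C) (hd : 1 ≤ d)
    (hgrowth : ∀ n : ℕ, 1 ≤ n → C * (n : ℝ) ^ d ≤ ((wordBall S (n - 1)).card : ℝ))
    (n : ℕ) (hn : 1 ≤ n) (F : ℕ) (hF : folner S n = (F : ℕ∞)) :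
    C * d ^ d / (1 + d) ^ (1 + d) * (n : ℝ) ^ d ≤ (F : ℝ) :=
  stmt10_general S hsymm C d hC hd hgrowth n hn F hF
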